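/- Let A = F₂⟨w,z⟩/(w², z²) be the quotient of the free noncommutative algebra on w, z over F₂ by the two-sided ideal generated by w² and z². Then left multiplication by the element wz + zw on A is injective. -/

import Mathlib

/-!
Since `w² = z² = 0` in characteristic `2`, the elements `s = 1 + w` and `t = 1 + z` are
involutions. Hence `w ↦ 1 + s`, `z ↦ 1 + t` defines an algebra map from `A` to the group
algebra `F₂[D∞]` of the infinite dihedral group `D∞ = ⟨s, t | s² = t² = 1⟩` (`DihedralGroup 0`),
and the universal property of `D∞` gives a left inverse of it. The map sends `wz + zw` to
`st + ts = r + r⁻¹` with `r = st` of infinite order. If `(r + r⁻¹) x = 0` then `r⁴ x = x`, so the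
coefficients of `x` are constant along the infinite orbits `h ↦ r⁴ⁿ h`, and finiteness of the
support forces `x = 0`.
-/

/-- Relations defining `A = F₂⟨w,z⟩/(w², z²)`. -/
inductive sqRel : FreeAlgebra (ZMod 2) (Fin 2) → FreeAlgebra (ZMod 2) (Fin 2) → Prop
  | wsq : sqRel (FreeAlgebra.ι (ZMod 2) 0 * FreeAlgebra.ι (ZMod 2) 0) 0
  | zsq : sqRel (FreeAlgebra.ι (ZMod 2) 1 * FreeAlgebra.ι (ZMod 2) 1) 0

/-- `A = F₂⟨w,z⟩/(w², z²)`. -/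
abbrev sqAlg := RingQuot sqRel

noncomputable def wGen : sqAlg := RingQuot.mkRingHom sqRel (FreeAlgebra.ι (ZMod 2) 0)
noncomputable def zGen : sqAlg := RingQuot.mkRingHom sqRel (FreeAlgebra.ι (ZMod 2) 1)

open MonoidAlgebra

namespace MonoidAlgebra

variable {k G : Type*} [Group G] {g : G}

theorem eq_zero_of_of_mul_eq_self [Semiring k] (hg : ¬IsOfFinOrder g) {x : MonoidAlgebra k G}
    (hx : of k G g * x = x) : x = 0 := by
  by_contra hne
  obtain ⟨h, hh⟩ : x.coeff.support.Nonempty := by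
    rw [Finsupp.support_nonempty_iff]
    exact fun h0 => hne (coeff_injective (by simpa using h0))
  have hpow (n : ℕ) : of k G (g ^ n) * x = x := by
    induction n with
    | zero => rw [pow_zero, map_one, one_mul]
    | succ n ih => rw [pow_succ, map_mul, mul_assoc, hx, ih]
  have hmem (n : ℕ) : g ^ n * h ∈ x.coeff.support := by
    have := congr_arg (fun y => y.coeff (g ^ n * h)) (hpow n)
    simp only [of_apply, coeff_single_mul_apply, one_mul, inv_mul_cancel_left] at this
    rwa [Finsupp.mem_support_iff, ← this, ← Finsupp.mem_support_iff]
  exact Set.infinite_of_injective_forall_mem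
    ((mul_left_injective h).comp (injective_pow_iff_not_isOfFinOrder.2 hg)) hmem
    x.coeff.support.finite_toSet

theorem eq_zero_of_of_add_of_inv_mul_eq_zero [Ring k] (hg : ¬IsOfFinOrder g)
    {x : MonoidAlgebra k G} (hx : (of k G g + of k G g⁻¹) * x = 0) : x = 0 := by
  have hu : of k G g * (of k G g + of k G g⁻¹) = of k G g ^ 2 + 1 := by
    rw [mul_add, ← map_mul _ g g⁻¹, mul_inv_cancel, map_one, sq]
  have hfix : of k G (g ^ 4) * x = x := by
    rw [← sub_eq_zero, ← sub_one_mul, map_pow]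
    calc (of k G g ^ 4 - 1) * x
        = (of k G g ^ 2 - 1) * (of k G g * ((of k G g + of k G g⁻¹) * x)) := by
          rw [← mul_assoc (of k G g), hu, ← mul_assoc]; noncomm_ring
      _ = 0 := by rw [hx, mul_zero, mul_zero]
  exact eq_zero_of_of_mul_eq_self (fun h => hg (h.of_pow four_ne_zero)) hfix

end MonoidAlgebra

section Involutions

variable {H : Type*} [Group H] {a b : H}

lemma mul_zpow_mul_eq_mul_mul_zpow_neg (ha : a * a = 1) (hb : b * b = 1) (i : ℤ) :
    (a * b) ^ i * a = a * (a * b) ^ (-i) := by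
  have hconj : SemiconjBy a (a * b)⁻¹ (a * b) := by
    rw [SemiconjBy, mul_inv_rev, inv_eq_of_mul_eq_one_left ha, inv_eq_of_mul_eq_one_left hb,
      mul_assoc]
  rw [zpow_neg, ← inv_zpow]
  exact (hconj.zpow_right i).symm

namespace DihedralGroup

def liftInfinite (ha : a * a = 1) (hb : b * b = 1) : DihedralGroup 0 →* H where
  toFun -- `ZMod 0` is `ℤ` by definition
    | .r (i : ℤ) => (a * b) ^ i
    | .sr (i : ℤ) => a * (a * b) ^ i
  map_one' := zpow_zero _
  map_mul' := by
    have r_sr (i j : ℤ) : a * (a * b) ^ (j - i) = (a * b) ^ i * (a * (a * b) ^ j) := by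
      rw [← mul_assoc, mul_zpow_mul_eq_mul_mul_zpow_neg ha hb, mul_assoc, ← zpow_add,
        neg_add_eq_sub]
    have sr_r (i j : ℤ) : a * (a * b) ^ (i + j) = a * (a * b) ^ i * (a * b) ^ j := by
      rw [mul_assoc, ← zpow_add]
    have sr_sr (i j : ℤ) : (a * b) ^ (j - i) = a * (a * b) ^ i * (a * (a * b) ^ j) := by
      rw [← mul_assoc, mul_assoc a, mul_zpow_mul_eq_mul_mul_zpow_neg ha hb, ← mul_assoc, ha,
        one_mul, ← zpow_add, neg_add_eq_sub]
    rintro (i | i) (j | j)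
    · exact zpow_add (a * b) i j
    · exact r_sr i j
    · exact sr_r i j
    · exact sr_sr i j

@[simp]
lemma liftInfinite_sr_zero (ha : a * a = 1) (hb : b * b = 1) : liftInfinite ha hb (sr 0) = a := by
  change a * (a * b) ^ (0 : ℤ) = a
  rw [zpow_zero, mul_one]

@[simp]
lemma liftInfinite_sr_one (ha : a * a = 1) (hb : b * b = 1) : liftInfinite ha hb (sr 1) = b := by
  change a * (a * b) ^ (1 : ℤ) = b
  rw [zpow_one, ← mul_assoc, ha, one_mul]

end DihedralGroup

end Involutions

def Units.ofMulSelfEqOne {M : Type*} [Monoid M] (x : M) (hx : x * x = 1) : Mˣ := ⟨x, x, hx, hx⟩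

lemma Units.ofMulSelfEqOne_mul_self {M : Type*} [Monoid M] {x : M} (hx : x * x = 1) :
    ofMulSelfEqOne x hx * ofMulSelfEqOne x hx = 1 :=
  Units.ext hx

lemma two_eq_zero_of_zmod_two_algebra (A : Type*) [Semiring A] [Algebra (ZMod 2) A] :
    (2 : A) = 0 := by
  rw [← map_ofNat (algebraMap (ZMod 2) A) 2]
  exact (algebraMap (ZMod 2) A).map_zero

lemma one_add_mul_self_one_add {R : Type*} [Ring R] (h2 : (2 : R) = 0) (x : R) :
    (1 + x) * (1 + x) = 1 + x * x := by
  rw [show (1 + x) * (1 + x) = 1 + x * x + 2 * x by noncomm_ring, h2, zero_mul, add_zero]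

abbrev DihedralAlg := MonoidAlgebra (ZMod 2) (DihedralGroup 0)

namespace sqAlg

lemma mkAlgHom_ι_zero : RingQuot.mkAlgHom (ZMod 2) sqRel (FreeAlgebra.ι (ZMod 2) 0) = wGen := by
  rw [wGen, ← RingQuot.mkAlgHom_coe (ZMod 2) sqRel]; rfl

lemma mkAlgHom_ι_one : RingQuot.mkAlgHom (ZMod 2) sqRel (FreeAlgebra.ι (ZMod 2) 1) = zGen := by
  rw [zGen, ← RingQuot.mkAlgHom_coe (ZMod 2) sqRel]; rfl

lemma one_add_wGen_mul_self : (1 + wGen) * (1 + wGen) = 1 := by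
  rw [one_add_mul_self_one_add (two_eq_zero_of_zmod_two_algebra _), wGen, ← map_mul,
    RingQuot.mkRingHom_rel sqRel.wsq, map_zero, add_zero]

lemma one_add_zGen_mul_self : (1 + zGen) * (1 + zGen) = 1 := by
  rw [one_add_mul_self_one_add (two_eq_zero_of_zmod_two_algebra _), zGen, ← map_mul,
    RingQuot.mkRingHom_rel sqRel.zsq, map_zero, add_zero]

noncomputable def toDihedralAlg : sqAlg →ₐ[ZMod 2] DihedralAlg :=
  RingQuot.liftAlgHom (ZMod 2) ⟨FreeAlgebra.lift (ZMod 2)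
    ![1 + of _ _ (DihedralGroup.sr 0), 1 + of _ _ (DihedralGroup.sr 1)], by
    rintro _ _ ⟨⟩ <;>
    simp only [map_mul, FreeAlgebra.lift_ι_apply, map_zero, Matrix.cons_val_zero,
      Matrix.cons_val_one] <;>
    rw [one_add_mul_self_one_add (two_eq_zero_of_zmod_two_algebra _), ← map_mul,
      DihedralGroup.sr_mul_self, map_one, one_add_one_eq_two, two_eq_zero_of_zmod_two_algebra]⟩

noncomputable def ofDihedralAlg : DihedralAlg →ₐ[ZMod 2] sqAlg :=
  MonoidAlgebra.lift (ZMod 2) sqAlg (DihedralGroup 0) <| (Units.coeHom sqAlg).comp <|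
    DihedralGroup.liftInfinite (Units.ofMulSelfEqOne_mul_self one_add_wGen_mul_self)
      (Units.ofMulSelfEqOne_mul_self one_add_zGen_mul_self)

lemma toDihedralAlg_wGen : toDihedralAlg wGen = 1 + of _ _ (DihedralGroup.sr 0) := by
  rw [← mkAlgHom_ι_zero, toDihedralAlg, RingQuot.liftAlgHom_mkAlgHom_apply,
    FreeAlgebra.lift_ι_apply, Matrix.cons_val_zero]

lemma toDihedralAlg_zGen : toDihedralAlg zGen = 1 + of _ _ (DihedralGroup.sr 1) := by
  rw [← mkAlgHom_ι_one, toDihedralAlg, RingQuot.liftAlgHom_mkAlgHom_apply,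
    FreeAlgebra.lift_ι_apply, Matrix.cons_val_one, Matrix.cons_val_zero]

lemma ofDihedralAlg_toDihedralAlg (x : sqAlg) : ofDihedralAlg (toDihedralAlg x) = x := by
  suffices h : ofDihedralAlg.comp toDihedralAlg = AlgHom.id (ZMod 2) sqAlg from
    AlgHom.congr_fun h x
  ext i
  fin_cases i <;>
  simp [mkAlgHom_ι_zero, mkAlgHom_ι_one, toDihedralAlg_wGen, toDihedralAlg_zGen, ofDihedralAlg,
    Units.ofMulSelfEqOne, ← add_assoc, one_add_one_eq_two, two_eq_zero_of_zmod_two_algebra]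

lemma toDihedralAlg_wGen_mul_zGen_add :
    toDihedralAlg (wGen * zGen + zGen * wGen) =
      of _ _ (DihedralGroup.r 1) + of _ _ (DihedralGroup.r 1)⁻¹ := by
  rw [map_add, map_mul, map_mul, toDihedralAlg_wGen, toDihedralAlg_zGen,
    show ∀ S T : DihedralAlg,
      (1 + S) * (1 + T) + (1 + T) * (1 + S) = S * T + T * S + 2 * (1 + S + T) by
      intro S T; noncomm_ring,
    two_eq_zero_of_zmod_two_algebra DihedralAlg, zero_mul, add_zero, ← map_mul, ← map_mul,
    DihedralGroup.sr_mul_sr, DihedralGroup.sr_mul_sr, DihedralGroup.inv_r, sub_zero, zero_sub]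

end sqAlg

/-- In `A = F₂⟨w,z⟩/(w², z²)`, left multiplication by `wz + zw` is injective. -/
theorem stmt_11 :
    Function.Injective (fun a : sqAlg => (wGen * zGen + zGen * wGen) * a) := by
  refine (injective_iff_map_eq_zero (AddMonoidHom.mulLeft (wGen * zGen + zGen * wGen))).2
    fun a ha => ?_
  have hr_inf : ¬IsOfFinOrder (DihedralGroup.r 1 : DihedralGroup 0) :=
    orderOf_eq_zero_iff.1 DihedralGroup.orderOf_r_one
  have ha' : sqAlg.toDihedralAlg a = 0 :=
    MonoidAlgebra.eq_zero_of_of_add_of_inv_mul_eq_zero hr_inf <| by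
      rw [← sqAlg.toDihedralAlg_wGen_mul_zGen_add, ← map_mul]
      exact (congrArg _ ha).trans (map_zero _)
  rw [← sqAlg.ofDihedralAlg_toDihedralAlg a, ha', map_zero]
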